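/- Suppose s ∈ S(G,O) with G_s = G, C ⊆ O is a conjugacy class of G, and g1 ∈ C satisfies g1^n ∈ Z(G). Then for every g2 ∈ C one has x_{g1}^n · s = x_{g2}^n · s in S(G,O). -/

import Mathlib

/-- The defining relations of the factorization semigroup `S(G,O)`:
`x_{g₁} ⬝ x_{g₂} = x_{g₂} ⬝ x_{g₂⁻¹ g₁ g₂}`. -/
inductive FactRel (G : Type) [Group G] (O : Set G) :
    FreeSemigroup {g : G // g ∈ O} → FreeSemigroup {g : G // g ∈ O} → Prop
  | rel (g₁ g₂ : {g : G // g ∈ O}) (h : (g₂ : G)⁻¹ * g₁ * g₂ ∈ O) :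
      FactRel G O (FreeSemigroup.of g₁ * FreeSemigroup.of g₂)
        (FreeSemigroup.of g₂ * FreeSemigroup.of ⟨(g₂ : G)⁻¹ * g₁ * g₂, h⟩)

/-- The factorization semigroup `S(G,O)`. -/
def FactS (G : Type) [Group G] (O : Set G) :=
  (conGen (FactRel G O)).Quotient

instance (G : Type) [Group G] (O : Set G) : Semigroup (FactS G O) :=
  Con.semigroup _

/-- The generator `x_g` of `S(G,O)`. -/
def xg {G : Type} [Group G] {O : Set G} (g : {g : G // g ∈ O}) : FactS G O :=
  (conGen (FactRel G O)).toQuotient (FreeSemigroup.of g)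

/-- The element of `S(G,O)` given by the word `x_{g} ⬝ x_{g₁} ⬝ ... ⬝ x_{gₖ}`. -/
def wordOf {G : Type} [Group G] {O : Set G} (g : {g : G // g ∈ O})
    (gs : List {g : G // g ∈ O}) : FactS G O :=
  gs.foldl (fun s h => s * xg h) (xg g)

/-- `spow s n = s^(n+1)` : the `(n+1)`-fold product of `s` with itself. -/
def spow {S : Type} [Mul S] (s : S) : ℕ → S
  | 0 => s
  | n + 1 => spow s n * s

/-
If `a^(n+1)` is central then `x_a^(n+1)` commutes with every generator, while pushing it through
`t ∈ S(G,O)` conjugates its index by the product `π(t)` of the factors of `t`; together,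
`x_a^(n+1) t = x_{π(t)⁻¹ a π(t)}^(n+1) t`. So the `w` with `x_a^(n+1) s = x_{w⁻¹ a w}^(n+1) s` for
all such `a` form a subgroup `H(s)` containing `π(s)`, with `H(s) ≤ H(s t)` and `H(t) ≤ H(s t)`
(conjugate by `π(s) ∈ H(s t)`). By induction along a word for `s`, every factor of `s` lies in
`H(s)`, hence `H(s) ⊇ G_s = G`; and `g₂` is a conjugate of `g₁`.
-/

namespace FactS

variable {G : Type} [Group G] {O : Set G}

@[elab_as_elim]
theorem induction_on {p : FactS G O → Prop} (t : FactS G O) (of : ∀ a, p (xg a))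
    (mul : ∀ s t, p s → p t → p (s * t)) : p t :=
  Con.induction_on t fun x =>
    FreeSemigroup.recOnMul x of fun u v hu hv => by rw [Con.coe_mul]; exact mul _ _ hu hv

theorem toQuotient_mk_eq_wordOf (g : {g : G // g ∈ O}) (gs : List {g : G // g ∈ O}) :
    (conGen (FactRel G O)).toQuotient (FreeSemigroup.mk g gs) = wordOf g gs := by
  induction gs using List.reverseRecOn with
  | nil => rfl
  | append_singleton gs b ih =>
    rw [wordOf, List.foldl_append, ← wordOf, ← ih]
    rfl

theorem exists_eq_wordOf (t : FactS G O) : ∃ g gs, t = wordOf g gs :=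
  Con.induction_on t fun ⟨g, gs⟩ => ⟨g, gs, toQuotient_mk_eq_wordOf g gs⟩

theorem wordOf_concat (g b : {g : G // g ∈ O}) (gs : List {g : G // g ∈ O}) :
    wordOf g (gs ++ [b]) = wordOf g gs * xg b := by
  simp only [wordOf, List.foldl_append, List.foldl_cons, List.foldl_nil]

def prod : FactS G O →ₙ* G where
  toFun t := Con.liftOn t (FreeSemigroup.lift Subtype.val) fun _ _ h =>
    (Con.ker_rel _).1 <| Con.conGen_le.2 (fun _ _ r => by
      cases r
      simp [Con.ker_rel, mul_assoc]) h
  map_mul' s t := Con.induction_on₂ s t fun _ _ => map_mul (FreeSemigroup.lift Subtype.val) _ _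

@[simp]
theorem prod_xg (a : {g : G // g ∈ O}) : prod (xg a) = a := by
  simp [prod, xg]

section Conjugation

variable (hO : ∀ g ∈ O, ∀ h : G, h⁻¹ * g * h ∈ O)

def conjGen (w : G) (a : {g : G // g ∈ O}) : {g : G // g ∈ O} :=
  ⟨w⁻¹ * a * w, hO a a.2 w⟩

@[simp]
theorem coe_conjGen (w : G) (a : {g : G // g ∈ O}) : (conjGen hO w a : G) = w⁻¹ * a * w := rfl

theorem conjGen_conjGen (w w' : G) (a : {g : G // g ∈ O}) :
    conjGen hO w (conjGen hO w' a) = conjGen hO (w' * w) a :=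
  Subtype.ext (by simp [mul_assoc])

@[simp]
theorem conjGen_one (a : {g : G // g ∈ O}) : conjGen hO 1 a = a :=
  Subtype.ext (by simp)

theorem conjGen_of_mem_center {w : G} (hw : w ∈ Subgroup.center G) (a : {g : G // g ∈ O}) :
    conjGen hO w a = a :=
  Subtype.ext (by rw [coe_conjGen, mul_assoc, Subgroup.mem_center_iff.1 hw a, inv_mul_cancel_left])

theorem pow_conjGen_mem_center {n : ℕ} {a : {g : G // g ∈ O}} (ha : (a : G) ^ n ∈ Subgroup.center G)
    (w : G) : (conjGen hO w a : G) ^ n ∈ Subgroup.center G := by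
  have hpow : (w⁻¹ * a * w) ^ n = w⁻¹ * (a : G) ^ n * w := by simpa using conj_pow (a := w⁻¹)
  rw [coe_conjGen, hpow]
  simpa using Subgroup.instNormalCenter.conj_mem _ ha w⁻¹

theorem xg_mul_xg (a b : {g : G // g ∈ O}) : xg a * xg b = xg b * xg (conjGen hO b a) :=
  (Con.eq _).2 (.of _ _ (.rel a b _))

theorem spow_xg_mul_xg (n : ℕ) (a b : {g : G // g ∈ O}) :
    spow (xg a) n * xg b = xg b * spow (xg (conjGen hO b a)) n := by
  induction n with
  | zero => exact xg_mul_xg hO a b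
  | succ n ih => rw [spow, spow, mul_assoc, xg_mul_xg hO a b, ← mul_assoc, ih, mul_assoc]

theorem xg_mul_spow_xg (n : ℕ) (a b : {g : G // g ∈ O}) :
    xg b * spow (xg a) n = spow (xg a) n * xg (conjGen hO ((a : G) ^ (n + 1)) b) := by
  induction n with
  | zero => rw [zero_add, pow_one]; exact xg_mul_xg hO b a
  | succ n ih =>
    rw [spow, ← mul_assoc, ih, mul_assoc, xg_mul_xg hO _ a, conjGen_conjGen, ← pow_succ,
      mul_assoc]

end Conjugation

theorem commute_spow_xg (hO : ∀ g ∈ O, ∀ h : G, h⁻¹ * g * h ∈ O) {n : ℕ} {a : {g : G // g ∈ O}}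
    (ha : (a : G) ^ (n + 1) ∈ Subgroup.center G) (t : FactS G O) :
    Commute (spow (xg a) n) t := by
  induction t using induction_on with
  | of b => exact ((xg_mul_spow_xg hO n a b).trans (by rw [conjGen_of_mem_center hO ha])).symm
  | mul s t hs ht => exact hs.mul_right ht

section Stabilizer

variable (hO : ∀ g ∈ O, ∀ h : G, h⁻¹ * g * h ∈ O)

theorem spow_xg_mul (n : ℕ) (a : {g : G // g ∈ O}) (t : FactS G O) :
    spow (xg a) n * t = t * spow (xg (conjGen hO (prod t) a)) n := by
  induction t using induction_on generalizing a with
  | of b => rw [prod_xg, spow_xg_mul_xg]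
  | mul s t hs ht => rw [← mul_assoc, hs, mul_assoc, ht, map_mul, conjGen_conjGen, mul_assoc]

theorem spow_xg_mul_eq_of_pow_mem_center {n : ℕ} {a : {g : G // g ∈ O}}
    (ha : (a : G) ^ (n + 1) ∈ Subgroup.center G) (t : FactS G O) :
    spow (xg a) n * t = spow (xg (conjGen hO (prod t) a)) n * t := by
  rw [spow_xg_mul, (commute_spow_xg hO (pow_conjGen_mem_center hO ha _) t).eq]

def conjStabilizer (n : ℕ) (s : FactS G O) : Subgroup G where
  carrier := {w | ∀ a : {g : G // g ∈ O}, (a : G) ^ (n + 1) ∈ Subgroup.center G →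
    spow (xg a) n * s = spow (xg (conjGen hO w a)) n * s}
  one_mem' _ _ := by rw [conjGen_one]
  mul_mem' {w w'} hw hw' a ha := by
    rw [hw a ha, hw' _ (pow_conjGen_mem_center hO ha w), conjGen_conjGen]
  inv_mem' {w} hw a ha := by
    rw [hw _ (pow_conjGen_mem_center hO ha w⁻¹), conjGen_conjGen, inv_mul_cancel, conjGen_one]

theorem prod_mem_conjStabilizer (n : ℕ) (s : FactS G O) : prod s ∈ conjStabilizer hO n s :=
  fun _ ha => spow_xg_mul_eq_of_pow_mem_center hO ha s

theorem conjStabilizer_le_mul_right (n : ℕ) (s t : FactS G O) :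
    conjStabilizer hO n s ≤ conjStabilizer hO n (s * t) := fun w hw a ha => by
  rw [← mul_assoc, hw a ha, mul_assoc]

theorem conjStabilizer_le_mul_left (n : ℕ) (s t : FactS G O) :
    conjStabilizer hO n t ≤ conjStabilizer hO n (s * t) := by
  intro w hw
  set p := prod s
  have hp : p ∈ conjStabilizer hO n (s * t) :=
    conjStabilizer_le_mul_right hO n s t (prod_mem_conjStabilizer hO n s)
  have hconj : p * w * p⁻¹ ∈ conjStabilizer hO n (s * t) := fun a ha => by
    rw [← mul_assoc, ← mul_assoc, spow_xg_mul hO n a s, spow_xg_mul hO n _ s, mul_assoc,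
      mul_assoc, hw _ (pow_conjGen_mem_center hO ha p), conjGen_conjGen, conjGen_conjGen,
      inv_mul_cancel_right]
  simpa [mul_assoc] using mul_mem (mul_mem (inv_mem hp) hconj) hp

theorem closure_factors_le_conjStabilizer (n : ℕ) (g : {g : G // g ∈ O})
    (gs : List {g : G // g ∈ O}) :
    Subgroup.closure {a : G | a ∈ (g :: gs).map Subtype.val} ≤
      conjStabilizer hO n (wordOf g gs) := by
  induction gs using List.reverseRecOn with
  | nil =>
    show _ ≤ conjStabilizer hO n (xg g)
    simpa [Subgroup.closure_le] using prod_mem_conjStabilizer hO n (xg g)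
  | append_singleton gs b ih =>
    rw [wordOf_concat, Subgroup.closure_le]
    intro a ha
    obtain ha | rfl : a ∈ (g :: gs).map Subtype.val ∨ a = b := by simpa [or_assoc] using ha
    · exact conjStabilizer_le_mul_right hO n _ _ (ih (Subgroup.subset_closure ha))
    · rw [← prod_xg b]
      exact conjStabilizer_le_mul_left hO n _ _ (prod_mem_conjStabilizer hO n _)

end Stabilizer

end FactS

theorem stmt11_general (G : Type) [Group G] (O : Set G)
    (hO : ∀ g ∈ O, ∀ h : G, h⁻¹ * g * h ∈ O)
    (Gs : FactS G O → Subgroup G)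
    (hGs : ∀ (g : {g : G // g ∈ O}) (gs : List {g : G // g ∈ O}),
      Gs (wordOf g gs) = Subgroup.closure {a : G | a ∈ (g :: gs).map Subtype.val}) :
    ∀ (s : FactS G O), Gs s = ⊤ →
      ∀ (C : Set G) (hCO : C ⊆ O) (g₁ : G) (hg₁ : g₁ ∈ C),
        C = {x : G | IsConj g₁ x} →
        ∀ n : ℕ, g₁ ^ (n + 1) ∈ Subgroup.center G →
          ∀ (g₂ : G) (hg₂ : g₂ ∈ C),
            spow (xg ⟨g₁, hCO hg₁⟩) n * s = spow (xg ⟨g₂, hCO hg₂⟩) n * s := by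
  intro s hs C hCO g₁ hg₁ hC n hn g₂ hg₂
  obtain ⟨g, gs, rfl⟩ := FactS.exists_eq_wordOf s
  have htop : FactS.conjStabilizer hO n (wordOf g gs) = ⊤ := by
    rw [eq_top_iff, ← hs, hGs]
    exact FactS.closure_factors_le_conjStabilizer hO n g gs
  obtain ⟨z, hz⟩ := isConj_iff.1 (by simpa [hC] using hg₂ : IsConj g₁ g₂)
  have hconj : FactS.conjGen hO z⁻¹ ⟨g₁, hCO hg₁⟩ = ⟨g₂, hCO hg₂⟩ :=
    Subtype.ext (by simp [← hz])
  rw [← hconj]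
  exact (Subgroup.eq_top_iff' _).1 htop z⁻¹ _ hn

theorem stmt11 (G : Type) [Group G] (O : Set G) (h1 : (1 : G) ∉ O)
    (hO : ∀ g ∈ O, ∀ h : G, h⁻¹ * g * h ∈ O)
    (Gs : FactS G O → Subgroup G)
    (hGs : ∀ (g : {g : G // g ∈ O}) (gs : List {g : G // g ∈ O}),
      Gs (wordOf g gs) = Subgroup.closure {a : G | a ∈ (g :: gs).map Subtype.val}) :
    ∀ (s : FactS G O), Gs s = ⊤ →
      ∀ (C : Set G) (hCO : C ⊆ O) (g₁ : G) (hg₁ : g₁ ∈ C),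
        C = {x : G | IsConj g₁ x} →
        ∀ n : ℕ, g₁ ^ (n + 1) ∈ Subgroup.center G →
          ∀ (g₂ : G) (hg₂ : g₂ ∈ C),
            spow (xg ⟨g₁, hCO hg₁⟩) n * s = spow (xg ⟨g₂, hCO hg₂⟩) n * s :=
  stmt11_general G O hO Gs hGs
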